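/- Let G = (V,(E_i)_{i=1}^τ) be a temporal graph with destination vertex z, and let 𝒱 := {(v,t) ∈ V × [τ] : v ∈ e for some e ∈ E_t} be the set of non-isolated vertex appearances. Define the arc-weighted directed graph D with vertex set {z} ∪ {v_t : (v,t) ∈ 𝒱} and arcs: for each t ∈ [τ] and each edge {v,u} ∈ E_t, the arcs (v_t,u_t) and (u_t,v_t) of weight 1; for each vertex v and each pair of times t_1 < t_2 with (v,t_1),(v,t_2) ∈ 𝒱 and t_2 = min{t : (v,t) ∈ 𝒱, t > t_1}, the arc (v_{t_2}, v_{t_1}) of weight 0; and, if (z,t') ∈ 𝒱 for some t', the arc (z, z_t) of weight 0 where t = max{t' : (z,t') ∈ 𝒱}. Then for every (v,t) ∈ 𝒱, the minimum total arc weight of a directed z-v_t path in D equals d(v,t) (where this minimum is ∞ if v_t is not reachable from z in D). -/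

import Mathlib

attribute [local instance] Classical.propDecidable

noncomputable section

/-- A temporal graph: a lifetime `tau` and, for each time step, a set of
undirected edges (unordered pairs of distinct vertices) over `V`;
edges exist only at time steps in `[1, tau]`. -/
structure TemporalGraph (V : Type*) where
  tau : ℕ
  E : ℕ → Sym2 V → Prop
  time_mem : ∀ t e, E t e → 1 ≤ t ∧ t ≤ tau
  not_diag : ∀ t e, E t e → ¬ e.IsDiag

namespace TemporalGraph

variable {V : Type*}

/-- `G.IsPath s z m vs ts` : the sequence `(({vs (i-1), vs i}, ts i))_{i=1}^m` is a
temporal `s`-`z` path of length `m` in `G` (pairwise distinct vertices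
`vs 0 = s, vs 1, …, vs m = z` and nondecreasing time stamps). -/
def IsPath (G : TemporalGraph V) (s z : V) (m : ℕ) (vs : ℕ → V) (ts : ℕ → ℕ) : Prop :=
  vs 0 = s ∧ vs m = z ∧
  (∀ i j, i ≤ m → j ≤ m → i ≠ j → vs i ≠ vs j) ∧
  (∀ i, 1 ≤ i → i ≤ m → G.E (ts i) s(vs (i - 1), vs i)) ∧
  (∀ i, 1 ≤ i → i + 1 ≤ m → ts i ≤ ts (i + 1))

/-- `δ`-restless temporal path: consecutive time-edges are at most `δ` time steps apart. -/
def IsRestlessPath (G : TemporalGraph V) (δ : ℕ) (s z : V) (m : ℕ) (vs : ℕ → V)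
    (ts : ℕ → ℕ) : Prop :=
  G.IsPath s z m vs ts ∧ ∀ i, 1 ≤ i → i + 1 ≤ m → ts (i + 1) ≤ ts i + δ

/-- temporal `s`-`z` walk (vertices may repeat). -/
def IsWalk (G : TemporalGraph V) (s z : V) (m : ℕ) (vs : ℕ → V) (ts : ℕ → ℕ) : Prop :=
  vs 0 = s ∧ vs m = z ∧
  (∀ i, 1 ≤ i → i ≤ m → G.E (ts i) s(vs (i - 1), vs i)) ∧
  (∀ i, 1 ≤ i → i + 1 ≤ m → ts i ≤ ts (i + 1))

/-- `δ`-restless temporal walk. -/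
def IsRestlessWalk (G : TemporalGraph V) (δ : ℕ) (s z : V) (m : ℕ) (vs : ℕ → V)
    (ts : ℕ → ℕ) : Prop :=
  G.IsWalk s z m vs ts ∧ ∀ i, 1 ≤ i → i + 1 ≤ m → ts (i + 1) ≤ ts i + δ

/-- `G.dist z v t` : the minimum length of a temporal `v`-`z` path in `G` whose
departure time is at least `t`; `⊤` if no such path exists, and `0` for `v = z`. -/
def dist (G : TemporalGraph V) (z v : V) (t : ℕ) : ℕ∞ :=
  if v = z then 0
  else sInf {x : ℕ∞ | ∃ (m : ℕ) (vs : ℕ → V) (ts : ℕ → ℕ),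
    G.IsPath v z m vs ts ∧ t ≤ ts 1 ∧ x = (m : ℕ∞)}

/-- The set `A_{a,t}^{b,t'}` of vertex appearances. -/
def AreaAB (G : TemporalGraph V) (z a : V) (t : ℕ) (b : V) (t' : ℕ) : Set (V × ℕ) :=
  {w | G.dist z b t' < G.dist z w.1 w.2 ∧ G.dist z w.1 w.2 < G.dist z a t ∧
       t ≤ w.2 ∧ w.2 ≤ t'}

/-- The set `A^{b,t'}` of vertex appearances. -/
def AreaB (G : TemporalGraph V) (z b : V) (t' : ℕ) : Set (V × ℕ) :=
  {w | G.dist z b t' < G.dist z w.1 w.2 ∧ G.dist z w.1 w.2 < ⊤ ∧ w.2 ≤ t'}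

/-- The temporal graph `G_{a,t}^{b,t'}`. -/
def SubAB (G : TemporalGraph V) (z : V) (δ : ℕ) (a : V) (t : ℕ) (b : V) (t' : ℕ) :
    TemporalGraph V where
  tau := G.tau
  E := fun u e =>
    (G.E u e ∧ ∃ x y, e = s(x, y) ∧ (x, u) ∈ G.AreaAB z a t b t' ∧
        (y, u) ∈ G.AreaAB z a t b t') ∨
    (G.E u e ∧ u = t ∧ ∃ x, e = s(a, x) ∧ (x, t) ∈ G.AreaAB z a t b t') ∨
    (G.E u e ∧ t' ≤ u + δ ∧ ∃ x, e = s(x, b) ∧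
        ((x, u) ∈ G.AreaAB z a t b t' ∨ (x = a ∧ u = t)))
  time_mem := by rintro u e (⟨h, -⟩ | ⟨h, -⟩ | ⟨h, -⟩) <;> exact G.time_mem u e h
  not_diag := by rintro u e (⟨h, -⟩ | ⟨h, -⟩ | ⟨h, -⟩) <;> exact G.not_diag u e h

/-- The temporal graph `G^{b,t'}`. -/
def SubB (G : TemporalGraph V) (z : V) (δ : ℕ) (b : V) (t' : ℕ) : TemporalGraph V where
  tau := G.tau
  E := fun u e =>
    (G.E u e ∧ ∃ x y, e = s(x, y) ∧ (x, u) ∈ G.AreaB z b t' ∧ (y, u) ∈ G.AreaB z b t') ∨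
    (G.E u e ∧ t' ≤ u + δ ∧ ∃ x, e = s(x, b) ∧ (x, u) ∈ G.AreaB z b t')
  time_mem := by rintro u e (⟨h, -⟩ | ⟨h, -⟩) <;> exact G.time_mem u e h
  not_diag := by rintro u e (⟨h, -⟩ | ⟨h, -⟩) <;> exact G.not_diag u e h

/-- The vertex set of a temporal graph: all endpoints of its time-edges. -/
def vertexSet (G : TemporalGraph V) : Set V := {x | ∃ u e, G.E u e ∧ x ∈ e}

/-- Minimum length of a `δ`-restless temporal `a`-`b` path in `G` (`⊤` if none). -/
def restlessDist (G : TemporalGraph V) (δ : ℕ) (a b : V) : ℕ∞ :=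
  sInf {x : ℕ∞ | ∃ m vs ts, G.IsRestlessPath δ a b m vs ts ∧ x = (m : ℕ∞)}

/-- The base case of the table `T`: the value `T[u,t']` when `d(s,1) - d(u,t') ≤ ℓ`. -/
def tableBase (G : TemporalGraph V) (s z : V) (δ ℓ : ℕ) (u : V) (t' : ℕ) : ℕ∞ :=
  if u = s then 0
  else if 1 ≤ restlessDist (G.SubB z δ u t') δ s u ∧
          restlessDist (G.SubB z δ u t') δ s u ≤ (2 * ℓ : ℕ)
    then restlessDist (G.SubB z δ u t') δ s u
    else ⊤

/-- Fuelled version of the recursively defined table `T` (the fuel is an upper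
bound on the recursion depth, which strictly decreases along the recursion of
the table via `d(s,1) - d(·,·)`). -/
def tableFuel (G : TemporalGraph V) (s z : V) (δ ℓ : ℕ) : ℕ → V → ℕ → ℕ∞
  | 0, u, t' => tableBase G s z δ ℓ u t'
  | n + 1, u, t' =>
    if G.dist z s 1 - G.dist z u t' ≤ (ℓ : ℕ∞) then tableBase G s z δ ℓ u t'
    else sInf (insert ⊤ {x : ℕ∞ | ∃ (v : V) (t ℓ' : ℕ),
      1 ≤ t ∧ t ≤ t' ∧ (∃ e, G.E t e ∧ v ∈ e) ∧
      G.dist z u t' < G.dist z v t ∧ G.dist z v t ≤ G.dist z u t' + (ℓ : ℕ∞) + 1 ∧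
      1 ≤ ℓ' ∧ ℓ' ≤ 2 * ℓ + 1 ∧
      restlessDist (G.SubAB z δ v t u t') δ v u = (ℓ' : ℕ∞) ∧
      x = tableFuel G s z δ ℓ n v t + (ℓ' : ℕ∞)})

/-- The table `T` of the dynamic program, for the instance `(G,s,z,δ,k)`
(with `ℓ := k - d(s,1)`). -/
def table (G : TemporalGraph V) (s z : V) (δ k : ℕ) (u : V) (t' : ℕ) : ℕ∞ :=
  tableFuel G s z δ (k - (G.dist z s 1).toNat) ((G.dist z s 1).toNat + 1) u t'

/-- `vs i` is a distance separator of the temporal `s`-`z` path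
`(({vs (i-1), vs i}, ts i))_{i=1}^k` (with the convention `ts (k+1) = ts k`). -/
def IsDistSep (G : TemporalGraph V) (z : V) (k : ℕ) (vs : ℕ → V) (ts : ℕ → ℕ)
    (i : ℕ) : Prop :=
  (∀ j, j < i → G.dist z (vs i) (ts (i + 1)) < G.dist z (vs j) (ts (j + 1))) ∧
  (∀ j, i < j → j ≤ k → G.dist z (vs j) (ts (j + 1)) < G.dist z (vs i) (ts (i + 1)))

/-- The underlying (static) graph of a temporal graph. -/
def underlying (G : TemporalGraph V) : SimpleGraph V where
  Adj x y := ∃ t, G.E t s(x, y)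
  symm := by
    constructor
    rintro x y ⟨t, h⟩
    exact ⟨t, by rwa [Sym2.eq_swap]⟩
  loopless := by
    constructor
    rintro x ⟨t, h⟩
    exact G.not_diag t _ h (by simp)

/-- The set of non-isolated vertex appearances of `G`. -/
def NonIsolated (G : TemporalGraph V) : Set (V × ℕ) := {p | ∃ e, G.E p.2 e ∧ p.1 ∈ e}

/-- The weighted arcs of the auxiliary directed graph `D` (for destination `z`):
`DArc G z x y w` means there is an arc from `x` to `y` of weight `w`.
`Sum.inl ()` is the special vertex `z` of `D`; `Sum.inr (v, t)` is the vertex `v_t`. -/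
def DArc (G : TemporalGraph V) (z : V) : Unit ⊕ V × ℕ → Unit ⊕ V × ℕ → ℕ → Prop
  | Sum.inr (v, ta), Sum.inr (u, tb), w =>
      (w = 1 ∧ ta = tb ∧ v ≠ u ∧ G.E ta s(v, u)) ∨
      (w = 0 ∧ v = u ∧ (v, ta) ∈ G.NonIsolated ∧ (v, tb) ∈ G.NonIsolated ∧ tb < ta ∧
        ∀ t'', tb < t'' → t'' < ta → (v, t'') ∉ G.NonIsolated)
  | Sum.inl _, Sum.inr (u, tb), w =>
      w = 0 ∧ u = z ∧ (z, tb) ∈ G.NonIsolated ∧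
        ∀ t'', (z, t'') ∈ G.NonIsolated → t'' ≤ tb
  | _, _, _ => False

/-- The minimum total arc weight of a directed path in `D` from the special
vertex `z` to the vertex `v_t` (`⊤` if `v_t` is not reachable from `z`). -/
def dMinWeight (G : TemporalGraph V) (z v : V) (t : ℕ) : ℕ∞ :=
  sInf {x : ℕ∞ | ∃ (n : ℕ) (w : ℕ → Unit ⊕ V × ℕ) (wt : ℕ → ℕ),
    w 0 = Sum.inl () ∧ w n = Sum.inr (v, t) ∧
    (∀ i j, i ≤ n → j ≤ n → i ≠ j → w i ≠ w j) ∧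
    (∀ i, i < n → DArc G z (w i) (w (i + 1)) (wt i)) ∧
    x = ∑ i ∈ Finset.range n, (wt i : ℕ∞)}

end TemporalGraph

open TemporalGraph

/-!
Reversing a directed path of `D` from `z` to `v_t` turns its weight-1 arcs into the time-edges
of a temporal walk from `v` to `z` departing no earlier than `t`, and its weight-0 arcs into
waiting. Hence `d`, extended by `0` at the root `z` of `D`, is a potential on `D`: along every
arc, `d` of the head is at most `d` of the tail plus the weight. Summing along a path gives
`d(v,t) ≤` its weight.

Conversely, a temporal path from `v` to `z` of length `m`, read backwards, becomes a walk in `D`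
of weight `m` (wait at `z` from its last appearance, step back along each time-edge, and wait
between consecutive time-edges); as the weights are nonnegative, cutting out cycles turns it into
a path of no larger weight.
-/

section WeightedWalk

variable {α : Type*} (R : α → α → ℕ → Prop)

def minWalkWeight (a b : α) : ℕ∞ :=
  sInf {x : ℕ∞ | ∃ (n : ℕ) (w : ℕ → α) (wt : ℕ → ℕ), w 0 = a ∧ w n = b ∧
    (∀ i, i < n → R (w i) (w (i + 1)) (wt i)) ∧ x = ∑ i ∈ Finset.range n, (wt i : ℕ∞)}

def minPathWeight (a b : α) : ℕ∞ :=
  sInf {x : ℕ∞ | ∃ (n : ℕ) (w : ℕ → α) (wt : ℕ → ℕ), w 0 = a ∧ w n = b ∧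
    (∀ i j, i ≤ n → j ≤ n → i ≠ j → w i ≠ w j) ∧
    (∀ i, i < n → R (w i) (w (i + 1)) (wt i)) ∧ x = ∑ i ∈ Finset.range n, (wt i : ℕ∞)}

variable {R}

theorem exists_injective_walk_of_walk {n : ℕ} {w : ℕ → α} {wt : ℕ → ℕ}
    (hw : ∀ i, i < n → R (w i) (w (i + 1)) (wt i)) :
    ∃ (n' : ℕ) (w' : ℕ → α) (wt' : ℕ → ℕ), w' 0 = w 0 ∧ w' n' = w n ∧
      (∀ i j, i ≤ n' → j ≤ n' → i ≠ j → w' i ≠ w' j) ∧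
      (∀ i, i < n' → R (w' i) (w' (i + 1)) (wt' i)) ∧
      ∑ i ∈ Finset.range n', wt' i ≤ ∑ i ∈ Finset.range n, wt i := by
  induction n using Nat.strong_induction_on generalizing w wt with
  | _ n ih =>
  by_cases hinj : ∀ i j, i ≤ n → j ≤ n → i ≠ j → w i ≠ w j
  · exact ⟨n, w, wt, rfl, rfl, hinj, hw, le_rfl⟩
  push Not at hinj
  obtain ⟨i, j, hi, hj, hij, hwij⟩ := hinj
  wlog hlt : i < j generalizing i j
  · exact this j i hj hi hij.symm hwij.symm (by omega)
  -- cut out the closed subwalk from `w i` to `w j`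
  set d := j - i
  let w' : ℕ → α := fun k => if k ≤ i then w k else w (k + d)
  let wt' : ℕ → ℕ := fun k => if k < i then wt k else wt (k + d)
  have hw' : ∀ k, k < n - d → R (w' k) (w' (k + 1)) (wt' k) := by
    intro k hk
    rcases lt_trichotomy k i with hki | rfl | hki
    · simpa [w', wt', hki, hki.le, Nat.succ_le_of_lt hki] using hw k (by omega)
    · simpa [w', wt', hwij, show k + 1 + d = j + 1 by omega, show k + d = j by omega]
        using hw j (by omega)
    · simpa [w', wt', show ¬k ≤ i by omega, show ¬k + 1 ≤ i by omega, show ¬k < i by omega,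
        show k + 1 + d = k + d + 1 by omega] using hw (k + d) (by omega)
  have hend : w' (n - d) = w n := by
    by_cases h : n - d ≤ i
    · simp [w', show n - d = i by omega, hwij, show j = n by omega]
    · simp only [w', if_neg h, show n - d + d = n by omega]
  have hsum : ∑ k ∈ Finset.range (n - d), wt' k ≤ ∑ k ∈ Finset.range n, wt k := by
    rw [show n - d = i + (n - j) by omega, Finset.sum_range_add]
    conv_rhs => rw [show n = j + (n - j) by omega, Finset.sum_range_add]
    have hpre : ∑ k ∈ Finset.range i, wt' k = ∑ k ∈ Finset.range i, wt k :=
      Finset.sum_congr rfl fun k hk => if_pos (Finset.mem_range.mp hk)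
    have hsuf : ∑ k ∈ Finset.range (n - j), wt' (i + k)
        = ∑ k ∈ Finset.range (n - j), wt (j + k) :=
      Finset.sum_congr rfl fun k _ => by simp only [wt', if_neg (show ¬i + k < i by omega),
        show i + k + d = j + k by omega]
    have hij' : ∑ k ∈ Finset.range i, wt k ≤ ∑ k ∈ Finset.range j, wt k :=
      Finset.sum_le_sum_of_subset (Finset.range_subset_range.mpr hlt.le)
    omega
  obtain ⟨n', w'', wt'', h0, hn, hinj, hw'', hsum'⟩ := ih (n - d) (by omega) hw'
  exact ⟨n', w'', wt'', by simp [h0, w'], hn.trans hend, hinj, hw'', hsum'.trans hsum⟩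

theorem minPathWeight_le_minWalkWeight (a b : α) : minPathWeight R a b ≤ minWalkWeight R a b := by
  refine le_sInf ?_
  rintro _ ⟨n, w, wt, rfl, rfl, hw, rfl⟩
  obtain ⟨n', w', wt', h0, hn, hinj, hw', hsum⟩ := exists_injective_walk_of_walk hw
  calc minPathWeight R (w 0) (w n) ≤ ∑ i ∈ Finset.range n', (wt' i : ℕ∞) :=
        sInf_le ⟨n', w', wt', h0, hn, hinj, hw', rfl⟩
    _ ≤ ∑ i ∈ Finset.range n, (wt i : ℕ∞) := by exact_mod_cast hsum

theorem minWalkWeight_self (a : α) : minWalkWeight R a a = 0 :=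
  nonpos_iff_eq_zero.mp <| sInf_le ⟨0, fun _ => a, fun _ => 0, rfl, rfl, by simp, by simp⟩

theorem minWalkWeight_le_add {a b c : α} {k : ℕ} (h : R b c k) :
    minWalkWeight R a c ≤ minWalkWeight R a b + k := by
  rw [← tsub_le_iff_right]
  refine le_sInf ?_
  rintro _ ⟨n, w, wt, rfl, rfl, hw, rfl⟩
  rw [tsub_le_iff_right]
  refine sInf_le ⟨n + 1, fun i => if i ≤ n then w i else c, fun i => if i < n then wt i else k,
    by simp, by simp, fun i hi => ?_, ?_⟩
  · rcases (Nat.lt_succ_iff.mp hi).lt_or_eq with hi | rfl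
    · simpa [hi.le, hi, Nat.succ_le_of_lt hi] using hw i hi
    · simpa using h
  · rw [Finset.sum_range_succ]
    simp only [lt_irrefl, if_false]
    congr 1
    exact Finset.sum_congr rfl fun i hi => by rw [if_pos (Finset.mem_range.mp hi)]

theorem le_add_sum_of_walk (φ : α → ℕ∞) (hφ : ∀ a b c, R a b c → φ b ≤ φ a + c)
    {n : ℕ} {w : ℕ → α} {wt : ℕ → ℕ} (hw : ∀ i, i < n → R (w i) (w (i + 1)) (wt i)) :
    φ (w n) ≤ φ (w 0) + ∑ i ∈ Finset.range n, (wt i : ℕ∞) := by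
  induction n with
  | zero => simp
  | succ n ih =>
    calc φ (w (n + 1)) ≤ φ (w n) + wt n := hφ _ _ _ (hw n (by omega))
      _ ≤ φ (w 0) + ∑ i ∈ Finset.range n, (wt i : ℕ∞) + wt n := by
        gcongr
        exact ih fun i hi => hw i (by omega)
      _ = φ (w 0) + ∑ i ∈ Finset.range (n + 1), (wt i : ℕ∞) := by
        rw [Finset.sum_range_succ, add_assoc]

theorem le_add_minPathWeight (φ : α → ℕ∞) (hφ : ∀ a b c, R a b c → φ b ≤ φ a + c) (a b : α) :
    φ b ≤ φ a + minPathWeight R a b := by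
  rw [← tsub_le_iff_left]
  refine le_sInf ?_
  rintro _ ⟨n, w, wt, rfl, rfl, -, hw, rfl⟩
  rw [tsub_le_iff_left]
  exact le_add_sum_of_walk φ hφ hw

end WeightedWalk

namespace TemporalGraph

variable {V : Type*} {G : TemporalGraph V} {x z : V} {m : ℕ} {vs : ℕ → V} {ts : ℕ → ℕ}

theorem IsPath.ts_le (hP : G.IsPath x z m vs ts) {i j : ℕ} (hi : 1 ≤ i) (hij : i ≤ j)
    (hj : j ≤ m) : ts i ≤ ts j := by
  induction j, hij using Nat.le_induction with
  | base => rfl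
  | succ j _ ih => exact (ih (by omega)).trans (hP.2.2.2.2 j (by omega) hj)

theorem IsPath.drop (hP : G.IsPath x z m vs ts) {j : ℕ} (hj : j ≤ m) :
    G.IsPath (vs j) z (m - j) (fun i => vs (i + j)) (fun i => ts (i + j)) := by
  obtain ⟨-, hm, hinj, hE, hts⟩ := hP
  refine ⟨by simp, by simpa [Nat.sub_add_cancel hj] using hm,
    fun i k hi hk hik => hinj _ _ (by omega) (by omega) (by omega), fun i hi him => ?_,
    fun i hi him => by simpa [Nat.add_right_comm] using hts (i + j) (by omega) (by omega)⟩
  simpa [show i + j - 1 = i - 1 + j by omega] using hE (i + j) (by omega) (by omega)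

theorem IsPath.cons (hP : G.IsPath x z m vs ts) {u : V} {s : ℕ} (hE : G.E s s(u, x))
    (hu : ∀ i, i ≤ m → vs i ≠ u) (hs : ∀ i, 1 ≤ i → i ≤ m → s ≤ ts i) :
    G.IsPath u z (m + 1) (fun i => if i = 0 then u else vs (i - 1))
      (fun i => if i ≤ 1 then s else ts (i - 1)) := by
  obtain ⟨h0, hm, hinj, hE', hts⟩ := hP
  refine ⟨rfl, by simpa using hm, fun i j hi hj hij => ?_, fun i hi him => ?_,
    fun i hi him => ?_⟩
  · rcases Nat.eq_zero_or_pos i with rfl | hi0 <;> rcases Nat.eq_zero_or_pos j with rfl | hj0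
    · exact absurd rfl hij
    · simpa [hj0.ne'] using (hu (j - 1) (by omega)).symm
    · simpa [hi0.ne'] using hu (i - 1) (by omega)
    · simpa [hi0.ne', hj0.ne'] using hinj (i - 1) (j - 1) (by omega) (by omega) (by omega)
  · rcases hi.eq_or_lt with rfl | hi1
    · simpa [h0] using hE
    · simpa [show i ≠ 0 by omega, show i - 1 ≠ 0 by omega, show ¬i ≤ 1 by omega,
        show i - 1 - 1 = i - 2 by omega] using hE' (i - 1) (by omega) (by omega)
  · rcases hi.eq_or_lt with rfl | hi1
    · simpa using hs 1 le_rfl (by omega)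
    · simpa [show ¬i ≤ 1 by omega, show i ≠ 0 by omega, show i - 1 + 1 = i by omega]
        using hts (i - 1) (by omega) (by omega)

theorem dist_le_of_isPath {t : ℕ} (hP : G.IsPath x z m vs ts)
    (ht : ∀ i, 1 ≤ i → i ≤ m → t ≤ ts i) : G.dist z x t ≤ m := by
  unfold dist
  split_ifs with hxz
  · exact bot_le
  · have hm : m ≠ 0 := by
      rintro rfl
      exact hxz (hP.1.symm.trans hP.2.1)
    exact sInf_le ⟨m, vs, ts, hP, ht 1 le_rfl (by omega), rfl⟩

theorem le_dist_of_forall_isPath {t : ℕ} {y : ℕ∞}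
    (h : ∀ m vs ts, G.IsPath x z m vs ts → (∀ i, 1 ≤ i → i ≤ m → t ≤ ts i) → y ≤ m) :
    y ≤ G.dist z x t := by
  unfold dist
  split_ifs with hxz
  · subst hxz
    simpa using h 0 (fun _ => x) (fun _ => 0)
      ⟨rfl, rfl, fun i j hi hj hij => absurd (by omega) hij, by omega, by omega⟩ (by omega)
  · refine le_sInf ?_
    rintro _ ⟨m, vs, ts, hP, ht, rfl⟩
    exact h m vs ts hP fun i hi him => ht.trans (hP.ts_le le_rfl hi him)

theorem dist_mono (G : TemporalGraph V) (z x : V) : Monotone (G.dist z x) := fun _ _ htt' =>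
  le_dist_of_forall_isPath fun _ _ _ hP ht =>
    dist_le_of_isPath hP fun i hi him => htt'.trans (ht i hi him)

/-- A temporal path from `x` can either be entered at `u` or prefixed by the time-edge `ux`. -/
theorem dist_le_dist_add_one {u : V} {s : ℕ} (hE : G.E s s(u, x)) :
    G.dist z u s ≤ G.dist z x s + 1 := by
  rw [← tsub_le_iff_right]
  refine le_dist_of_forall_isPath fun m vs ts hP hs => ?_
  rw [tsub_le_iff_right]
  by_cases hu : ∃ j, j ≤ m ∧ vs j = u
  · obtain ⟨j, hj, rfl⟩ := hu
    calc G.dist z (vs j) s ≤ (m - j : ℕ) :=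
          dist_le_of_isPath (hP.drop hj) fun i hi him => hs _ (by omega) (by omega)
      _ ≤ m + 1 := by norm_cast; omega
  · push Not at hu
    refine (dist_le_of_isPath (hP.cons hE hu hs) fun i hi him => ?_).trans (by push_cast; rfl)
    split_ifs
    exacts [le_rfl, hs (i - 1) (by omega) (by omega)]

theorem exists_dArc_root {t : ℕ} (h : (z, t) ∈ G.NonIsolated) :
    ∃ t', t ≤ t' ∧ (z, t') ∈ G.NonIsolated ∧ G.DArc z (Sum.inl ()) (Sum.inr (z, t')) 0 := by
  have htau : ∀ {t'}, (z, t') ∈ G.NonIsolated → t' ≤ G.tau :=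
    fun ⟨e, he, _⟩ => (G.time_mem _ e he).2
  have hlast : ∀ t', (z, t') ∈ G.NonIsolated →
      t' ≤ Nat.findGreatest (fun t' => (z, t') ∈ G.NonIsolated) G.tau :=
    fun t' ht' => Nat.le_findGreatest (htau ht') ht'
  have hmem := Nat.findGreatest_spec (P := fun t' => (z, t') ∈ G.NonIsolated) (htau h) h
  exact ⟨_, hlast t h, hmem, rfl, rfl, hmem, hlast⟩

theorem exists_dArc_wait {v : V} {ta tb : ℕ} (ha : (v, ta) ∈ G.NonIsolated)
    (hb : (v, tb) ∈ G.NonIsolated) (hlt : tb < ta) :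
    ∃ s, tb ≤ s ∧ s < ta ∧ (v, s) ∈ G.NonIsolated ∧
      G.DArc z (Sum.inr (v, ta)) (Sum.inr (v, s)) 0 := by
  let P := fun s => tb ≤ s ∧ (v, s) ∈ G.NonIsolated
  have hs : P (Nat.findGreatest P (ta - 1)) :=
    Nat.findGreatest_spec (show tb ≤ ta - 1 by omega) ⟨le_rfl, hb⟩
  have hlt' : Nat.findGreatest P (ta - 1) < ta := by
    have := Nat.findGreatest_le (P := P) (ta - 1)
    omega
  refine ⟨_, hs.1, hlt', hs.2, Or.inr ⟨rfl, rfl, ha, hs.2, hlt', fun t'' h1 h2 hni => ?_⟩⟩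
  exact Nat.findGreatest_is_greatest h1 (by omega) ⟨by omega, hni⟩

def dDist (G : TemporalGraph V) (z : V) : Unit ⊕ V × ℕ → ℕ∞ :=
  Sum.elim (fun _ => 0) fun p => G.dist z p.1 p.2

theorem dDist_le_add_of_dArc {a b : Unit ⊕ V × ℕ} {c : ℕ} (h : G.DArc z a b c) :
    G.dDist z b ≤ G.dDist z a + c := by
  rcases a with _ | ⟨v, ta⟩ <;> rcases b with _ | ⟨u, tb⟩
  · exact h.elim
  · obtain ⟨-, rfl, -⟩ := h
    simp [dDist, dist]
  · exact h.elim
  · rcases h with ⟨rfl, rfl, -, hE⟩ | ⟨rfl, rfl, -, -, hlt, -⟩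
    · exact dist_le_dist_add_one (Sym2.eq_swap ▸ hE)
    · simpa [dDist] using G.dist_mono z v hlt.le

theorem dMinWeight_eq_minPathWeight (v : V) (t : ℕ) :
    G.dMinWeight z v t = minPathWeight (G.DArc z) (Sum.inl ()) (Sum.inr (v, t)) := rfl

theorem dist_le_dMinWeight (v : V) (t : ℕ) : G.dist z v t ≤ G.dMinWeight z v t := by
  rw [dMinWeight_eq_minPathWeight]
  simpa [dDist] using le_add_minPathWeight (G.dDist z) (fun _ _ _ => dDist_le_add_of_dArc)
    (Sum.inl ()) (Sum.inr (v, t))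

theorem minWalkWeight_dArc_wait_le {v : V} {ta tb : ℕ} (ha : (v, ta) ∈ G.NonIsolated)
    (hb : (v, tb) ∈ G.NonIsolated) (hle : tb ≤ ta) :
    minWalkWeight (G.DArc z) (Sum.inl ()) (Sum.inr (v, tb)) ≤
      minWalkWeight (G.DArc z) (Sum.inl ()) (Sum.inr (v, ta)) := by
  induction ta using Nat.strong_induction_on with
  | _ ta ih =>
  rcases hle.eq_or_lt with rfl | hlt
  · exact le_rfl
  obtain ⟨s, hbs, hsa, hs, harc⟩ := exists_dArc_wait (z := z) ha hb hlt
  calc minWalkWeight (G.DArc z) (Sum.inl ()) (Sum.inr (v, tb))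
      ≤ minWalkWeight (G.DArc z) (Sum.inl ()) (Sum.inr (v, s)) := ih s hsa hs hbs
    _ ≤ minWalkWeight (G.DArc z) (Sum.inl ()) (Sum.inr (v, ta)) := by
      simpa using minWalkWeight_le_add harc

theorem minWalkWeight_dArc_root_eq_zero {t : ℕ} (h : (z, t) ∈ G.NonIsolated) :
    minWalkWeight (G.DArc z) (Sum.inl ()) (Sum.inr (z, t)) = 0 := by
  obtain ⟨t', htt', ht', harc⟩ := exists_dArc_root h
  refine nonpos_iff_eq_zero.mp ((minWalkWeight_dArc_wait_le ht' h htt').trans ?_)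
  simpa [minWalkWeight_self] using minWalkWeight_le_add (a := Sum.inl ()) harc

theorem minWalkWeight_dArc_le_of_isPath : ∀ {v : V} {vs : ℕ → V} {ts : ℕ → ℕ} {t : ℕ},
    G.IsPath v z m vs ts → (∀ i, 1 ≤ i → i ≤ m → t ≤ ts i) → (v, t) ∈ G.NonIsolated →
      minWalkWeight (G.DArc z) (Sum.inl ()) (Sum.inr (v, t)) ≤ m := by
  induction m with
  | zero =>
    intro v vs ts t hP _ hvt
    obtain rfl : v = z := hP.1.symm.trans hP.2.1
    exact (minWalkWeight_dArc_root_eq_zero hvt).le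
  | succ m ih =>
    intro v vs ts t hP ht hvt
    have hE : G.E (ts 1) s(vs 1, v) := by
      simpa [Sym2.eq_swap, hP.1] using hP.2.2.2.1 1 le_rfl (by omega)
    have hne : vs 1 ≠ v := hP.1 ▸ hP.2.2.1 1 0 (by omega) (by omega) one_ne_zero
    have harc : G.DArc z (Sum.inr (vs 1, ts 1)) (Sum.inr (v, ts 1)) 1 := Or.inl ⟨rfl, rfl, hne, hE⟩
    have htail := ih (hP.drop (j := 1) (by omega))
      (fun i _ _ => hP.ts_le le_rfl (by omega) (by omega)) ⟨_, hE, Sym2.mem_mk_left _ _⟩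
    calc minWalkWeight (G.DArc z) (Sum.inl ()) (Sum.inr (v, t))
        ≤ minWalkWeight (G.DArc z) (Sum.inl ()) (Sum.inr (v, ts 1)) :=
          minWalkWeight_dArc_wait_le ⟨_, hE, Sym2.mem_mk_right _ _⟩ hvt (ht 1 le_rfl (by omega))
      _ ≤ minWalkWeight (G.DArc z) (Sum.inl ()) (Sum.inr (vs 1, ts 1)) + 1 := by
          exact_mod_cast minWalkWeight_le_add harc
      _ ≤ (m + 1 : ℕ) := by
          push_cast
          gcongr

theorem dMinWeight_le_dist {v : V} {t : ℕ} (hvt : (v, t) ∈ G.NonIsolated) :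
    G.dMinWeight z v t ≤ G.dist z v t :=
  (minPathWeight_le_minWalkWeight _ _).trans <|
    le_dist_of_forall_isPath fun _ _ _ hP ht => minWalkWeight_dArc_le_of_isPath hP ht hvt

end TemporalGraph

/-- In the auxiliary weighted directed graph `D`, for every
non-isolated vertex appearance `(v,t)`, the minimum total arc weight of a
directed path from the special vertex `z` to `v_t` equals `d(v,t)`. -/
theorem statement15 {V : Type*} (G : TemporalGraph V) (z : V) :
    ∀ v t, (v, t) ∈ G.NonIsolated → G.dMinWeight z v t = G.dist z v t :=
  fun v t hvt => le_antisymm (dMinWeight_le_dist hvt) (dist_le_dMinWeight v t)
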